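/- arXiv:2403.12752 — 4 statements merged into one kernel-verified Lean document; each statement's English description precedes it below -/
import Mathlib

section
/- Dirichlet's density theorem: the limit as n → ∞ of (1/n²)·#{(a,b) ∈ ℕ² : 1 ≤ a,b ≤ n and gcd(a,b) = 1} exists and equals 6/π². -/
/-!
Möbius inversion, `∑_{d ∣ gcd(a,b)} μ d = [gcd(a,b) = 1]`, counts the coprime pairs in
`{1,…,n}²` as `∑_{d ≤ n} μ(d) ⌊n/d⌋²`. After dividing by `n²` the `d`-th term tends to
`μ(d)/d²` and is bounded by `1/d²`, so by dominated convergence (Tannery's theorem) the density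
tends to `∑ μ(d)/d² = 1/ζ(2) = 6/π²`.
-/

open Filter Finset ArithmeticFunction Topology
open scoped ArithmeticFunction.Moebius LSeries.notation

theorem LSeries_moebius_eq_inv_riemannZeta {s : ℂ} (hs : 1 < s.re) :
    L ↗μ s = (riemannZeta s)⁻¹ := by
  rw [← LSeries_zeta_eq_riemannZeta hs]
  exact eq_inv_of_mul_eq_one_right (LSeries_zeta_mul_Lseries_moebius hs)

theorem tsum_moebius_div_sq : ∑' d : ℕ, (μ d : ℝ) / (d : ℝ) ^ 2 = 6 / Real.pi ^ 2 := by
  have h := LSeries_moebius_eq_inv_riemannZeta (s := 2) (by norm_num)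
  rw [riemannZeta_two, inv_div, LSeries] at h
  apply Complex.ofReal_injective
  push_cast
  rw [← h]
  refine tsum_congr fun d => ?_
  rcases eq_or_ne d 0 with rfl | hd
  · simp
  · rw [LSeries.term_of_ne_zero hd, Complex.cpow_ofNat]

theorem sum_moebius_divisors_eq_ite (n : ℕ) :
    ∑ d ∈ n.divisors, μ d = if n = 1 then 1 else 0 := by
  simpa only [coe_mul_zeta_apply, one_apply] using congr($moebius_mul_coe_zeta n)

theorem Nat.filter_dvd_Icc_eq_divisors {m n : ℕ} (hm : m ≠ 0) (hmn : m ≤ n) :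
    {d ∈ Icc 1 n | d ∣ m} = m.divisors := by
  ext d
  simp only [mem_filter, Finset.mem_Icc, Nat.mem_divisors]
  refine ⟨fun ⟨_, hd⟩ => ⟨hd, hm⟩, fun ⟨hd, _⟩ => ⟨⟨Nat.pos_of_dvd_of_pos hd (by omega), ?_⟩, hd⟩⟩
  exact (Nat.le_of_dvd (by omega) hd).trans hmn

theorem Nat.card_filter_dvd_Icc (n d : ℕ) : #{x ∈ Icc 1 n | d ∣ x} = n / d :=
  Nat.Ioc_filter_dvd_card_eq_div n d

theorem card_coprime_pairs_Icc (m n : ℕ) :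
    (#{p ∈ Icc 1 m ×ˢ Icc 1 n | p.1.gcd p.2 = 1} : ℤ) =
      ∑ d ∈ Icc 1 n, μ d * (m / d : ℕ) * (n / d : ℕ) := by
  calc (#{p ∈ Icc 1 m ×ˢ Icc 1 n | p.1.gcd p.2 = 1} : ℤ)
      = ∑ p ∈ Icc 1 m ×ˢ Icc 1 n, ∑ d ∈ Icc 1 n with d ∣ p.1 ∧ d ∣ p.2, μ d := by
        rw [card_filter, Nat.cast_sum]
        refine sum_congr rfl fun p hp => ?_
        simp only [mem_product, Finset.mem_Icc] at hp
        simp_rw [← Nat.dvd_gcd_iff]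
        rw [Nat.filter_dvd_Icc_eq_divisors (Nat.gcd_ne_zero_right (by omega))
          ((Nat.gcd_le_right _ (by omega)).trans hp.2.2), sum_moebius_divisors_eq_ite]
        push_cast; rfl
    _ = ∑ d ∈ Icc 1 n, μ d * #{p ∈ Icc 1 m ×ˢ Icc 1 n | d ∣ p.1 ∧ d ∣ p.2} := by
        simp_rw [sum_filter]
        rw [sum_comm]
        simp [mul_comm, sum_ite]
    _ = ∑ d ∈ Icc 1 n, μ d * (m / d : ℕ) * (n / d : ℕ) := by
        simp_rw [filter_product, card_product, Nat.card_filter_dvd_Icc]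
        push_cast
        simp_rw [mul_assoc]

theorem card_coprime_pairs_Icc_div_sq_eq_tsum (n : ℕ) :
    (#{p ∈ Icc 1 n ×ˢ Icc 1 n | p.1.gcd p.2 = 1} : ℝ) / (n : ℝ) ^ 2 =
      ∑' d : ℕ, (μ d : ℝ) * (((n / d : ℕ) : ℝ) / n) ^ 2 := by
  have hvanish : ∀ d ∉ Icc 1 n, (μ d : ℝ) * (((n / d : ℕ) : ℝ) / n) ^ 2 = 0 := by
    intro d hd
    -- `n / 0 = 0` in `ℕ`, so the term vanishes at `d = 0` as well as for `d > n`
    have hdiv : n / d = 0 := by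
      rw [Finset.mem_Icc] at hd
      rw [Nat.div_eq_zero_iff]
      omega
    simp [hdiv]
  have hcount : (#{p ∈ Icc 1 n ×ˢ Icc 1 n | p.1.gcd p.2 = 1} : ℝ) =
      ∑ d ∈ Icc 1 n, (μ d : ℝ) * (n / d : ℕ) * (n / d : ℕ) := by
    rw [← Int.cast_natCast, card_coprime_pairs_Icc]
    push_cast; rfl
  rw [tsum_eq_sum hvanish, hcount, sum_div]
  exact sum_congr rfl fun d _ => by ring

theorem tendsto_natDiv_div_self_atTop (d : ℕ) :
    Tendsto (fun n : ℕ => ((n / d : ℕ) : ℝ) / n) atTop (𝓝 (d : ℝ)⁻¹) := by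
  rcases eq_or_ne d 0 with rfl | hd
  · simp
  have hd' : (0 : ℝ) < d := by positivity
  have h := ((tendsto_nat_floor_div_atTop (R := ℝ)).comp
    (tendsto_natCast_atTop_atTop.atTop_div_const hd')).div_const (d : ℝ)
  rw [one_div] at h
  refine h.congr fun n => ?_
  simp only [Function.comp_apply, Nat.floor_div_eq_div]
  field_simp

theorem natDiv_div_self_le_inv (n d : ℕ) : ((n / d : ℕ) : ℝ) / n ≤ (d : ℝ)⁻¹ := by
  rcases eq_or_ne n 0 with rfl | hn
  · simp
  calc ((n / d : ℕ) : ℝ) / n ≤ (n / d : ℝ) / n := by gcongr; exact Nat.cast_div_le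
    _ = (d : ℝ)⁻¹ := by field_simp

theorem norm_moebius_mul_natDiv_div_self_sq_le (n d : ℕ) :
    ‖(μ d : ℝ) * (((n / d : ℕ) : ℝ) / n) ^ 2‖ ≤ ((d : ℝ) ^ 2)⁻¹ := by
  have hμ : |(μ d : ℝ)| ≤ 1 := mod_cast abs_moebius_le_one
  have hq : 0 ≤ ((n / d : ℕ) : ℝ) / n := by positivity
  rw [norm_mul, norm_pow, Real.norm_eq_abs, Real.norm_eq_abs, abs_of_nonneg hq, ← inv_pow]
  exact (mul_le_of_le_one_left (by positivity) hμ).trans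
    (pow_le_pow_left₀ hq (natDiv_div_self_le_inv n d) 2)

/-- **Dirichlet's density theorem**: the proportion of coprime pairs in
`{1,…,n} × {1,…,n}` tends to `6/π²` as `n → ∞`. -/
theorem dirichlet_density :
    Tendsto
      (fun n : ℕ =>
        (((Finset.Icc 1 n ×ˢ Finset.Icc 1 n).filter
            fun p : ℕ × ℕ => Nat.gcd p.1 p.2 = 1).card : ℝ) / (n : ℝ) ^ 2)
      atTop (nhds (6 / Real.pi ^ 2)) := by
  simp_rw [card_coprime_pairs_Icc_div_sq_eq_tsum]
  have hlimit : ∑' d : ℕ, (μ d : ℝ) * ((d : ℝ)⁻¹) ^ 2 = 6 / Real.pi ^ 2 := by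
    simpa only [inv_pow, div_eq_mul_inv] using tsum_moebius_div_sq
  rw [← hlimit]
  exact tendsto_tsum_of_dominated_convergence (Real.summable_nat_pow_inv.mpr one_lt_two)
    (fun d => ((tendsto_natDiv_div_self_atTop d).pow 2).const_mul _)
    (.of_forall norm_moebius_mul_natDiv_div_self_sq_le)
end

section
/- Value of the Dirichlet series of Υ at s = 2: the series ∑_{n=1}^∞ Υ(n)/n² converges and equals 1/(ζ(2)·F). -/
open Finset

/-- The Feller–Tornier constant `F = ∏_{p prime} (1 − 2/p²)`. -/
noncomputable def fellerTornier : ℝ := ∏' p : Nat.Primes, (1 - 2 / ((p : ℕ) : ℝ) ^ 2)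

/-- The arithmetic function `Υ`, with `Υ(1) = 1` and
`Υ(n) = ∏_{p ∣ n} (1 − 1/p²)/(1 − 2/p²)` for `n ≥ 2`. -/
noncomputable def Upsilon (n : ℕ) : ℝ :=
  if n = 0 then 1 / ((Real.pi ^ 2 / 6) * fellerTornier)
  else ∏ p ∈ n.primeFactors, (1 - 1 / (p : ℝ) ^ 2) / (1 - 2 / (p : ℝ) ^ 2)

/-!
On a prime power, `Υ(pᵉ)/p²ᵉ = a xᵉ` for `e ≥ 1`, where `x = 1/p²` and `a = (1 - x)/(1 - 2x)`.
Since `a` is the fixed point of `a ↦ 1 + a x/(1 - x)`, the Euler factor of `Υ(n)/n²` at `p` is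
`a` itself. Multiplying the Euler product by `∏ₚ (1 - 2/p²) = F` and by the Euler product
`∏ₚ (1 - 1/p²)⁻¹ = ζ(2)` cancels every factor. Absolute convergence comes from the bound
`Υ(n) ≤ ∏_{p ∣ n} (1 + 2/p²) ≤ exp (2 ζ(2))`.
-/

open Real

lemma hasSum_ite_eq_zero_one_geometric {a x : ℝ} (hx0 : 0 ≤ x) (hx1 : x < 1) :
    HasSum (fun e : ℕ => if e = 0 then 1 else a * x ^ e) (1 + a * x / (1 - x)) := by
  have htail : HasSum (fun e : ℕ => a * x ^ (e + 1)) (a * x / (1 - x)) := by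
    simpa only [pow_succ', ← mul_assoc, div_eq_mul_inv] using
      (hasSum_geometric_of_lt_one hx0 hx1).mul_left (a * x)
  have h := (hasSum_nat_add_iff (f := fun e : ℕ => if e = 0 then (1 : ℝ) else a * x ^ e) 1).mp
    (by simpa using htail)
  simpa [add_comm] using h

noncomputable def upsilonFactor (q : ℝ) : ℝ := (1 - 1 / q ^ 2) / (1 - 2 / q ^ 2)

lemma upsilon_of_ne_zero {n : ℕ} (hn : n ≠ 0) :
    Upsilon n = ∏ p ∈ n.primeFactors, upsilonFactor p := if_neg hn

lemma one_sub_div_sq_pos {c q : ℝ} (hc : c < 4) (hq : 2 ≤ q) : 0 < 1 - c / q ^ 2 := by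
  have hq2 : 4 ≤ q ^ 2 := by nlinarith
  rw [sub_pos, div_lt_one (by positivity)]
  linarith

lemma upsilonFactor_eq {q : ℝ} (hq : 2 ≤ q) : upsilonFactor q = (q ^ 2 - 1) / (q ^ 2 - 2) := by
  have hq2 : 4 ≤ q ^ 2 := by nlinarith
  have hq0 : q ≠ 0 := by positivity
  have hden : q ^ 2 - 2 ≠ 0 := by linarith
  rw [upsilonFactor]
  field_simp

lemma abs_upsilonFactor_le {q : ℝ} (hq : 2 ≤ q) : |upsilonFactor q| ≤ 1 + 2 / q ^ 2 := by
  have hq2 : 4 ≤ q ^ 2 := by nlinarith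
  have hden : 0 < q ^ 2 - 2 := by linarith
  have hexpand : (1 + 2 / q ^ 2) * (q ^ 2 - 2) = q ^ 2 - 4 / q ^ 2 := by field_simp; ring
  rw [upsilonFactor_eq hq, abs_of_pos (div_pos (by linarith) hden), div_le_iff₀ hden, hexpand]
  linarith [(div_le_one (by positivity)).mpr hq2]

lemma upsilonFactor_eq_one_add {q : ℝ} (hq : 2 ≤ q) :
    upsilonFactor q = 1 + upsilonFactor q * (1 / q ^ 2) / (1 - 1 / q ^ 2) := by
  have hq2 : 4 ≤ q ^ 2 := by nlinarith
  have hq0 : q ≠ 0 := by positivity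
  have hden : q ^ 2 - 2 ≠ 0 := by linarith
  have hnum : q ^ 2 - 1 ≠ 0 := by linarith
  rw [upsilonFactor_eq hq]
  field_simp
  ring

noncomputable def upsilonTerm (n : ℕ) : ℝ := Upsilon n / (n : ℝ) ^ 2

lemma upsilonTerm_zero : upsilonTerm 0 = 0 := by simp [upsilonTerm]

lemma upsilonTerm_one : upsilonTerm 1 = 1 := by simp [upsilonTerm, upsilon_of_ne_zero]

lemma upsilonTerm_mul {m n : ℕ} (h : m.Coprime n) :
    upsilonTerm (m * n) = upsilonTerm m * upsilonTerm n := by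
  rcases eq_or_ne m 0 with rfl | hm
  · simp [upsilonTerm_zero]
  rcases eq_or_ne n 0 with rfl | hn
  · simp [upsilonTerm_zero]
  simp only [upsilonTerm, upsilon_of_ne_zero hm, upsilon_of_ne_zero hn,
    upsilon_of_ne_zero (mul_ne_zero hm hn), h.primeFactors_mul,
    Finset.prod_union h.disjoint_primeFactors]
  push_cast
  ring

lemma abs_upsilon_le {n : ℕ} (hn : n ≠ 0) : |Upsilon n| ≤ exp (2 * (π ^ 2 / 6)) := by
  rw [upsilon_of_ne_zero hn, Finset.abs_prod]
  calc ∏ p ∈ n.primeFactors, |upsilonFactor p|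
      ≤ ∏ p ∈ n.primeFactors, (1 + 2 / (p : ℝ) ^ 2) :=
        Finset.prod_le_prod (fun _ _ => abs_nonneg _) fun p hp =>
          abs_upsilonFactor_le (by exact_mod_cast (Nat.prime_of_mem_primeFactors hp).two_le)
    _ ≤ exp (∑ p ∈ n.primeFactors, 2 / (p : ℝ) ^ 2) :=
        prod_one_add_le_exp_sum _ fun _ => by positivity
    _ ≤ exp (2 * (π ^ 2 / 6)) := by
        gcongr
        simpa only [mul_one_div] using
          sum_le_hasSum _ (fun _ _ => by positivity) (hasSum_zeta_two.mul_left 2)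

lemma summable_norm_upsilonTerm : Summable (‖upsilonTerm ·‖) := by
  refine (hasSum_zeta_two.summable.mul_left (exp (2 * (π ^ 2 / 6)))).of_nonneg_of_le
    (fun _ => norm_nonneg _) fun n => ?_
  rcases eq_or_ne n 0 with rfl | hn
  · simp [upsilonTerm_zero]
  rw [upsilonTerm, norm_div, norm_pow, Real.norm_natCast, Real.norm_eq_abs, mul_one_div]
  gcongr
  exact abs_upsilon_le hn

lemma hasSum_upsilonTerm_prime_pow {p : ℕ} (hp : p.Prime) :
    HasSum (fun e => upsilonTerm (p ^ e)) (upsilonFactor p) := by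
  have hp2 : (2 : ℝ) ≤ p := by exact_mod_cast hp.two_le
  have hx1 : 1 / (p : ℝ) ^ 2 < 1 := by linarith [one_sub_div_sq_pos (c := 1) (by norm_num) hp2]
  have hterm : (fun e => upsilonTerm (p ^ e)) =
      fun e => if e = 0 then 1 else upsilonFactor p * (1 / (p : ℝ) ^ 2) ^ e := by
    funext e
    rcases eq_or_ne e 0 with rfl | he
    · simp [upsilonTerm_one]
    rw [if_neg he, upsilonTerm, upsilon_of_ne_zero (pow_ne_zero _ hp.ne_zero),
      Nat.primeFactors_prime_pow he hp, Finset.prod_singleton]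
    push_cast
    ring
  rw [hterm]
  convert hasSum_ite_eq_zero_one_geometric (by positivity) hx1 using 1
  exact upsilonFactor_eq_one_add hp2

lemma hasProd_upsilonFactor :
    HasProd (fun p : Nat.Primes => upsilonFactor p) (∑' n, upsilonTerm n) := by
  have hfactor : (fun p : Nat.Primes => upsilonFactor p) =
      fun p : Nat.Primes => ∑' e, upsilonTerm ((p : ℕ) ^ e) :=
    funext fun p => (hasSum_upsilonTerm_prime_pow p.prop).tsum_eq.symm
  rw [hfactor]
  exact EulerProduct.eulerProduct_hasProd upsilonTerm_one (fun h => upsilonTerm_mul h)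
    summable_norm_upsilonTerm upsilonTerm_zero

lemma hasProd_inv_one_sub_one_div_sq :
    HasProd (fun p : Nat.Primes => (1 - 1 / ((p : ℕ) : ℝ) ^ 2)⁻¹) (π ^ 2 / 6) := by
  let f : ℕ →*₀ ℝ := invMonoidWithZeroHom.comp
    ((powMonoidWithZeroHom two_ne_zero).comp (Nat.castRingHom ℝ).toMonoidWithZeroHom)
  have hf : ∀ n, f n = 1 / (n : ℝ) ^ 2 := fun n => by rw [one_div]; rfl
  have hsum : Summable (‖f ·‖) := by
    simpa only [hf, norm_div, norm_one, norm_pow, Real.norm_natCast] using hasSum_zeta_two.summable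
  simpa only [hf, hasSum_zeta_two.tsum_eq] using
    EulerProduct.eulerProduct_completely_multiplicative_hasProd hsum

lemma hasProd_fellerTornier :
    HasProd (fun p : Nat.Primes => 1 - 2 / ((p : ℕ) : ℝ) ^ 2) fellerTornier := by
  have hsum : Summable (fun p : Nat.Primes => -(2 / ((p : ℕ) : ℝ) ^ 2)) := by
    have h : Summable (fun n : ℕ => 2 / (n : ℝ) ^ 2) := by
      simpa only [mul_one_div] using hasSum_zeta_two.summable.mul_left 2
    exact (h.comp_injective Subtype.val_injective).neg
  rw [fellerTornier]
  simpa only [← sub_eq_add_neg] using (Real.multipliable_one_add_of_summable hsum).hasProd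

/-- **Value of the Dirichlet series of `Υ` at `s = 2`**: the series
`∑_{n=1}^∞ Υ(n)/n²` converges and equals `1/(ζ(2)·F)`. -/
theorem upsilon_dirichlet_series_at_two :
    HasSum (fun n : ℕ => Upsilon (n + 1) / ((n : ℝ) + 1) ^ 2)
      (1 / ((Real.pi ^ 2 / 6) * fellerTornier)) := by
  have hcancel : ∀ p : Nat.Primes,
      upsilonFactor p * (1 - 2 / ((p : ℕ) : ℝ) ^ 2) * (1 - 1 / ((p : ℕ) : ℝ) ^ 2)⁻¹ = 1 := by
    intro p
    have hp2 : (2 : ℝ) ≤ (p : ℕ) := by exact_mod_cast p.prop.two_le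
    rw [upsilonFactor, div_mul_cancel₀ _ (one_sub_div_sq_pos (by norm_num) hp2).ne',
      mul_inv_cancel₀ (one_sub_div_sq_pos (by norm_num) hp2).ne']
  have hone : (∑' n, upsilonTerm n) * fellerTornier * (π ^ 2 / 6) = 1 :=
    ((hasProd_upsilonFactor.mul hasProd_fellerTornier).mul hasProd_inv_one_sub_one_div_sq).unique
      (by simpa only [hcancel] using hasProd_one)
  have hval : ∑' n, upsilonTerm n = 1 / ((π ^ 2 / 6) * fellerTornier) :=
    eq_one_div_of_mul_eq_one_left (by linear_combination hone)
  have hsum : HasSum upsilonTerm (1 / ((π ^ 2 / 6) * fellerTornier)) :=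
    hval ▸ summable_norm_upsilonTerm.of_norm.hasSum
  have hshift := (hasSum_nat_add_iff (f := upsilonTerm) 1).mpr
    (by rwa [Finset.sum_range_one, upsilonTerm_zero, add_zero])
  simpa [upsilonTerm] using hshift
end

section
/- Bounds for the convolution Υ ⋆ μ: for every integer n ≥ 2, |μ(n)|/n² ≤ (Υ ⋆ μ)(n) ≤ (1/F) · |μ(n)|/n². -/
open Finset ArithmeticFunction

/-- The Dirichlet convolution `Υ ⋆ μ`. -/
noncomputable def UpsilonStarMu (n : ℕ) : ℝ :=
  ∑ d ∈ n.divisors, Upsilon d * (moebius (n / d) : ℝ)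

/-!
`Υ` is the multiplicative function `n ↦ ∏_{p ∣ n} c(p)` with `c(p) = (1 − 1/p²)/(1 − 2/p²)`, so
`Υ ⋆ μ` is multiplicative, equal to `c(p) − 1 = p⁻² (1 − 2/p²)⁻¹` at primes and to `0` at higher
prime powers. Hence `(Υ ⋆ μ)(n) = |μ(n)|/n² · (∏_{p ∣ n} (1 − 2/p²))⁻¹`, and the finite product
lies between `F` and `1` since every factor lies in `(0, 1]`.
-/

theorem Nat.squarefree_iff_factorization_eq_one {n : ℕ} (hn : n ≠ 0) :
    Squarefree n ↔ ∀ p ∈ n.primeFactors, n.factorization p = 1 := by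
  rw [Nat.squarefree_iff_factorization_le_one hn]
  refine ⟨fun h p hp => le_antisymm (h p) ?_, fun h p => ?_⟩
  · exact Nat.one_le_iff_ne_zero.2 (Finsupp.mem_support_iff.1 (by simpa using hp))
  · by_cases hp : p ∈ n.primeFactors
    · exact (h p hp).le
    · rw [← Nat.support_factorization, Finsupp.notMem_support_iff] at hp
      omega

namespace ArithmeticFunction

open scoped Moebius

variable {R : Type*} [CommRing R]

theorem mul_moebius_apply_prime_pow_succ (f : ArithmeticFunction R) {p : ℕ} (hp : p.Prime)
    (k : ℕ) :
    (f * (μ : ArithmeticFunction R)) (p ^ (k + 1)) = f (p ^ (k + 1)) - f (p ^ k) := by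
  rw [mul_apply, Nat.sum_divisorsAntidiagonal' fun a b => f a * (μ : ArithmeticFunction R) b,
    Nat.sum_divisors_prime_pow hp, sum_range_succ', sum_range_succ']
  have hvanish : ∀ i ∈ range k,
      f (p ^ (k + 1) / p ^ (i + 1 + 1)) * (μ : ArithmeticFunction R) (p ^ (i + 1 + 1)) = 0 :=
    fun i _ => by simp [moebius_apply_prime_pow hp]
  rw [sum_eq_zero hvanish, Nat.pow_div (by omega) hp.pos, Nat.pow_div (by omega) hp.pos]
  simp [moebius_apply_prime hp]
  ring

theorem prodPrimeFactors_mul_moebius_apply_prime_pow (g : ℕ → R) {p k : ℕ} (hp : p.Prime)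
    (hk : k ≠ 0) :
    (prodPrimeFactors g * (μ : ArithmeticFunction R)) (p ^ k) =
      if k = 1 then g p - 1 else 0 := by
  obtain ⟨k, rfl⟩ := Nat.exists_eq_succ_of_ne_zero hk
  rw [mul_moebius_apply_prime_pow_succ _ hp, prodPrimeFactors_apply (pow_ne_zero _ hp.ne_zero),
    Nat.primeFactors_prime_pow k.succ_ne_zero hp, prod_singleton]
  rcases k with _ | k
  · simp
  · rw [prodPrimeFactors_apply (pow_ne_zero _ hp.ne_zero),
      Nat.primeFactors_prime_pow k.succ_ne_zero hp, prod_singleton]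
    simp

theorem prodPrimeFactors_mul_moebius_apply (g : ℕ → R) (n : ℕ) :
    (prodPrimeFactors g * (μ : ArithmeticFunction R)) n =
      if Squarefree n then ∏ p ∈ n.primeFactors, (g p - 1) else 0 := by
  rcases eq_or_ne n 0 with rfl | hn
  · simp
  rw [((IsMultiplicative.prodPrimeFactors g).mul isMultiplicative_moebius.intCast)
      |>.multiplicative_factorization _ hn, Finsupp.prod, Nat.support_factorization,
    if_congr (Nat.squarefree_iff_factorization_eq_one hn) rfl rfl, ← prod_ite_zero]
  refine prod_congr rfl fun p hp => ?_
  exact prodPrimeFactors_mul_moebius_apply_prime_pow g (Nat.prime_of_mem_primeFactors hp)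
    (Finsupp.mem_support_iff.1 (by simpa using hp))

end ArithmeticFunction

open Real
open scoped ArithmeticFunction.Moebius

section TprodOfSummableLog

variable {ι : Type*} {f : ι → ℝ}

theorem tprod_pos_of_summable_log (hf : ∀ i, 0 < f i) (hlog : Summable fun i => Real.log (f i)) :
    0 < ∏' i, f i := by
  rw [← rexp_tsum_eq_tprod hf hlog]
  exact exp_pos _

theorem tprod_le_prod_of_le_one (hf : ∀ i, 0 < f i) (hf1 : ∀ i, f i ≤ 1)
    (hlog : Summable fun i => Real.log (f i)) (s : Finset ι) : ∏' i, f i ≤ ∏ i ∈ s, f i := by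
  rw [← rexp_tsum_eq_tprod hf hlog, ← exp_log (prod_pos fun i _ => hf i),
    log_prod fun i _ => (hf i).ne', exp_le_exp, ← neg_le_neg_iff, ← tsum_neg, ← sum_neg_distrib]
  exact hlog.neg.sum_le_tsum s fun i _ => neg_nonneg.2 (log_nonpos (hf i).le (hf1 i))

end TprodOfSummableLog

theorem one_sub_two_div_sq_pos {p : ℕ} (hp : p.Prime) : 0 < 1 - 2 / (p : ℝ) ^ 2 := by
  have : (2 : ℝ) ^ 2 ≤ (p : ℝ) ^ 2 := by gcongr; exact_mod_cast hp.two_le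
  rw [sub_pos, div_lt_one (by positivity)]
  linarith

theorem summable_log_one_sub_two_div_sq :
    Summable fun p : Nat.Primes => Real.log (1 - 2 / ((p : ℕ) : ℝ) ^ 2) := by
  have h : Summable fun p : Nat.Primes => -(2 / ((p : ℕ) : ℝ) ^ 2) :=
    (((summable_nat_pow_inv.2 one_lt_two).mul_left 2).comp_injective Subtype.val_injective).neg
  simpa [sub_eq_add_neg] using summable_log_one_add_of_summable h

theorem fellerTornier_pos : 0 < fellerTornier :=
  tprod_pos_of_summable_log (fun p => one_sub_two_div_sq_pos p.2) summable_log_one_sub_two_div_sq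

theorem fellerTornier_le_prod_primeFactors (n : ℕ) :
    fellerTornier ≤ ∏ p ∈ n.primeFactors, (1 - 2 / (p : ℝ) ^ 2) := by
  have h := tprod_le_prod_of_le_one (fun p => one_sub_two_div_sq_pos p.2)
    (fun p : Nat.Primes => sub_le_self _ (by positivity)) summable_log_one_sub_two_div_sq
    (n.primeFactors.subtype Nat.Prime)
  refine h.trans_eq ((prod_subtype_eq_prod_filter (fun p : ℕ => 1 - 2 / (p : ℝ) ^ 2)).trans ?_)
  rw [filter_true_of_mem fun p => Nat.prime_of_mem_primeFactors]

noncomputable def upsilonEulerFactor (p : ℕ) : ℝ :=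
  (1 - 1 / (p : ℝ) ^ 2) / (1 - 2 / (p : ℝ) ^ 2)

theorem upsilonEulerFactor_sub_one {p : ℕ} (hp : p.Prime) :
    upsilonEulerFactor p - 1 = ((p : ℝ) ^ 2)⁻¹ * (1 - 2 / (p : ℝ) ^ 2)⁻¹ := by
  rw [upsilonEulerFactor, div_sub_one (one_sub_two_div_sq_pos hp).ne', div_eq_mul_inv]
  ring

theorem upsilonStarMu_eq_prodPrimeFactors_mul_moebius (n : ℕ) :
    UpsilonStarMu n = (prodPrimeFactors upsilonEulerFactor * (μ : ArithmeticFunction ℝ)) n := by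
  rw [UpsilonStarMu, mul_apply,
    Nat.sum_divisorsAntidiagonal fun a b =>
      prodPrimeFactors upsilonEulerFactor a * (μ : ArithmeticFunction ℝ) b]
  refine sum_congr rfl fun d hd => ?_
  have hd0 : d ≠ 0 := (Nat.pos_of_mem_divisors hd).ne'
  rw [prodPrimeFactors_apply hd0, Upsilon, if_neg hd0, intCoe_apply]
  rfl

theorem upsilonStarMu_eq (n : ℕ) :
    UpsilonStarMu n =
      |(moebius n : ℝ)| / (n : ℝ) ^ 2 * (∏ p ∈ n.primeFactors, (1 - 2 / (p : ℝ) ^ 2))⁻¹ := by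
  rw [upsilonStarMu_eq_prodPrimeFactors_mul_moebius, prodPrimeFactors_mul_moebius_apply]
  split_ifs with hsq
  · have habs : |(moebius n : ℝ)| = 1 := by exact_mod_cast abs_moebius_eq_one_of_squarefree hsq
    rw [prod_congr rfl fun p hp => upsilonEulerFactor_sub_one (Nat.prime_of_mem_primeFactors hp),
      prod_mul_distrib, prod_inv_distrib, prod_inv_distrib, prod_pow, ← Nat.cast_prod,
      Nat.prod_primeFactors_of_squarefree hsq, habs, one_div]
  · simp [moebius_eq_zero_of_not_squarefree hsq]

theorem upsilonStarMu_bounds_general (n : ℕ) :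
    |(moebius n : ℝ)| / (n : ℝ) ^ 2 ≤ UpsilonStarMu n ∧
      UpsilonStarMu n ≤ (1 / fellerTornier) * (|(moebius n : ℝ)| / (n : ℝ) ^ 2) := by
  set Q := ∏ p ∈ n.primeFactors, (1 - 2 / (p : ℝ) ^ 2)
  have hFQ : fellerTornier ≤ Q := fellerTornier_le_prod_primeFactors n
  have hQ1 : Q ≤ 1 :=
    prod_le_one (fun p hp => (one_sub_two_div_sq_pos (Nat.prime_of_mem_primeFactors hp)).le)
      fun p _ => sub_le_self _ (by positivity)
  have hQ0 := fellerTornier_pos.trans_le hFQ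
  rw [upsilonStarMu_eq, mul_comm (1 / fellerTornier), one_div]
  exact ⟨le_mul_of_one_le_right (by positivity) ((one_le_inv₀ hQ0).2 hQ1),
    mul_le_mul_of_nonneg_left (inv_anti₀ fellerTornier_pos hFQ) (by positivity)⟩

/-- **Bounds for the convolution `Υ ⋆ μ`**: for every `n ≥ 2`,
`|μ(n)|/n² ≤ (Υ ⋆ μ)(n) ≤ (1/F) · |μ(n)|/n²`. -/
theorem upsilonStarMu_bounds (n : ℕ) (hn : 2 ≤ n) :
    |(moebius n : ℝ)| / (n : ℝ) ^ 2 ≤ UpsilonStarMu n ∧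
      UpsilonStarMu n ≤ (1 / fellerTornier) * (|(moebius n : ℝ)| / (n : ℝ) ^ 2) :=
  upsilonStarMu_bounds_general n
end

section
/- Average of Φ_M: for every integer M ≥ 1, (1/P_M²) · ∑_{0 ≤ u,v < P_M} Φ_M(u,v) = M² · ∏_{p prime, p < M} (1 − 1/p²). -/
/-!
Swapping the sums, `∑_{u,v < P_M} Φ_M(u,v)` counts, for each of the `M²` shifts `(k,l)`, the pairs
`(u,v) ∈ [0,P_M)²` such that no prime `p < M` divides both `u + k` and `v + l`. By the Chinese
remainder theorem `u ↦ (u + k mod p)_{p < M}` is a bijection from `[0,P_M)` onto `∏_p ℤ/p`, so each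
shift contributes the number of families of nonzero vectors in `(ℤ/p)²`, namely `∏_p (p² - 1)`.
-/

open Finset
open scoped Function

/-- `PM M = ∏_{p prime, p < M} p` (so `PM 1 = PM 2 = 1`). -/
def PM (M : ℕ) : ℕ := ∏ p ∈ (Finset.range M).filter Nat.Prime, p

/-- `Phi M u v` is the number of pairs `(k,l)` with `1 ≤ k,l ≤ M` such that no prime
`p < M` divides both `u + k` and `v + l`. -/
def Phi (M u v : ℕ) : ℕ :=
  (((Finset.Icc 1 M) ×ˢ (Finset.Icc 1 M)).filter
    fun kl : ℕ × ℕ => ∀ p : ℕ, p < M → p.Prime → ¬(p ∣ u + kl.1 ∧ p ∣ v + kl.2)).card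

theorem ZMod.sum_range_comp_natCast_add {β : Type*} [AddCommMonoid β] (n : ℕ) [NeZero n]
    (k : ℕ) (f : ZMod n → β) : ∑ u ∈ range n, f ((u + k : ℕ) : ZMod n) = ∑ x, f x := by
  refine sum_nbij' (fun u => ((u + k : ℕ) : ZMod n)) (fun x => (x - k).val) ?_ ?_ ?_ ?_ ?_
  · simp
  · simp [ZMod.val_lt]
  · intro u hu
    simp [ZMod.val_natCast, Nat.mod_eq_of_lt (mem_range.mp hu)]
  · simp
  · simp

theorem card_filter_forall_ne_zero {ι : Type*} [Fintype ι] [DecidableEq ι] {β : ι → Type*}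
    [∀ i, Fintype (β i)] [∀ i, DecidableEq (β i)] [∀ i, Zero (β i)] :
    #{x : Π i, β i | ∀ i, x i ≠ 0} = ∏ i, (Fintype.card (β i) - 1) := by
  have : ({x : Π i, β i | ∀ i, x i ≠ 0} : Finset _) = Fintype.piFinset fun _ => univ.erase 0 := by
    ext x
    simp
  simp [this, card_erase_of_mem]

section ChineseRemainder

variable {ι : Type*} [Fintype ι] [DecidableEq ι] (a : ι → ℕ) [∀ i, NeZero (a i)]
  (ha : Pairwise (Nat.Coprime on a))
include ha

theorem sum_range_prod_comp_natCast_add {β : Type*} [AddCommMonoid β] (k : ℕ)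
    (f : (Π i, ZMod (a i)) → β) :
    ∑ u ∈ range (∏ i, a i), f (fun i => ((u + k : ℕ) : ZMod (a i))) = ∑ x, f x := by
  have : NeZero (∏ i, a i) := ⟨prod_ne_zero_iff.mpr fun i _ => NeZero.ne (a i)⟩
  calc ∑ u ∈ range (∏ i, a i), f (fun i => ((u + k : ℕ) : ZMod (a i)))
      = ∑ u ∈ range (∏ i, a i), f (ZMod.prodEquivPi a ha ((u + k : ℕ) : ZMod (∏ i, a i))) := by
        simp only [map_natCast, Pi.natCast_def]
    _ = ∑ x, f (ZMod.prodEquivPi a ha x) :=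
        ZMod.sum_range_comp_natCast_add _ k (f ∘ ZMod.prodEquivPi a ha)
    _ = ∑ x, f x := (ZMod.prodEquivPi a ha).toEquiv.sum_comp f

theorem sum_range_sum_range_prod_comp_natCast_add {β : Type*} [AddCommMonoid β] (k l : ℕ)
    (f : (Π i, ZMod (a i) × ZMod (a i)) → β) :
    ∑ u ∈ range (∏ i, a i), ∑ v ∈ range (∏ i, a i),
        f (fun i => (((u + k : ℕ) : ZMod (a i)), ((v + l : ℕ) : ZMod (a i)))) = ∑ z, f z := by
  calc _ = ∑ x : Π i, ZMod (a i), ∑ y : Π i, ZMod (a i), f (fun i => (x i, y i)) := by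
        rw [← sum_range_prod_comp_natCast_add a ha k]
        refine sum_congr rfl fun u _ => ?_
        exact sum_range_prod_comp_natCast_add a ha l
          fun y => f fun i => (((u + k : ℕ) : ZMod (a i)), y i)
    _ = ∑ z, f z := by
        rw [← Fintype.sum_prod_type']
        exact (Equiv.arrowProdEquivProdArrow ι _ _).symm.sum_comp f

theorem card_filter_range_prod_natCast_add_ne_zero (k l : ℕ) :
    #{uv ∈ range (∏ i, a i) ×ˢ range (∏ i, a i) |
        ∀ i, (((uv.1 + k : ℕ) : ZMod (a i)), ((uv.2 + l : ℕ) : ZMod (a i))) ≠ 0} =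
      ∏ i, (a i ^ 2 - 1) := by
  rw [card_filter, sum_product,
    sum_range_sum_range_prod_comp_natCast_add a ha k l fun z => if ∀ i, z i ≠ 0 then 1 else 0,
    ← card_filter, card_filter_forall_ne_zero]
  simp only [Fintype.card_prod, ZMod.card, sq]

end ChineseRemainder

theorem phi_eq_card_filter_natCast_ne_zero (M u v : ℕ) :
    Phi M u v = #{kl ∈ Icc 1 M ×ˢ Icc 1 M | ∀ p : M.primesBelow,
      (((u + kl.1 : ℕ) : ZMod p), ((v + kl.2 : ℕ) : ZMod p)) ≠ 0} := by
  unfold Phi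
  congr 1
  refine filter_congr fun kl _ => ?_
  simp only [ne_eq, Prod.mk_eq_zero, ZMod.natCast_eq_zero_iff, Subtype.forall,
    Nat.mem_primesBelow, and_imp, not_and]

theorem sum_range_sum_range_phi (M : ℕ) :
    ∑ u ∈ range (PM M), ∑ v ∈ range (PM M), Phi M u v =
      M ^ 2 * ∏ p ∈ M.primesBelow, (p ^ 2 - 1) := by
  have : ∀ p : M.primesBelow, NeZero (p : ℕ) :=
    fun p => ⟨(Nat.prime_of_mem_primesBelow p.2).ne_zero⟩
  have hcoprime : Pairwise (Nat.Coprime on fun p : M.primesBelow => (p : ℕ)) := fun p q hpq =>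
    (Nat.coprime_primes (Nat.prime_of_mem_primesBelow p.2)
      (Nat.prime_of_mem_primesBelow q.2)).2 (Subtype.coe_ne_coe.2 hpq)
  have hPM : PM M = ∏ p : M.primesBelow, (p : ℕ) := (prod_coe_sort _ _).symm
  calc ∑ u ∈ range (PM M), ∑ v ∈ range (PM M), Phi M u v
      = ∑ uv ∈ range (PM M) ×ˢ range (PM M), Phi M uv.1 uv.2 := by
        rw [sum_product]
    _ = ∑ kl ∈ Icc 1 M ×ˢ Icc 1 M, #{uv ∈ range (PM M) ×ˢ range (PM M) | ∀ p : M.primesBelow,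
          (((uv.1 + kl.1 : ℕ) : ZMod p), ((uv.2 + kl.2 : ℕ) : ZMod p)) ≠ 0} := by
        simp only [phi_eq_card_filter_natCast_ne_zero, card_filter]
        exact sum_comm
    _ = M ^ 2 * ∏ p ∈ M.primesBelow, (p ^ 2 - 1) := by
        rw [hPM]
        simp only [card_filter_range_prod_natCast_add_ne_zero _ hcoprime, sum_const,
          card_product, Nat.card_Icc, Nat.add_sub_cancel, smul_eq_mul, sq,
          prod_coe_sort M.primesBelow fun p => p * p - 1]

theorem phi_average_general (M : ℕ) :
    (1 / (PM M : ℝ) ^ 2) *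
        ∑ u ∈ Finset.range (PM M), ∑ v ∈ Finset.range (PM M), (Phi M u v : ℝ) =
      (M : ℝ) ^ 2 * ∏ p ∈ (Finset.range M).filter Nat.Prime, (1 - 1 / (p : ℝ) ^ 2) := by
  have hPM : (PM M : ℝ) ≠ 0 := Nat.cast_ne_zero.2 <|
    prod_ne_zero_iff.2 fun p hp => (Nat.prime_of_mem_primesBelow hp).ne_zero
  have hprod : ((∏ p ∈ M.primesBelow, (p ^ 2 - 1) : ℕ) : ℝ) =
      (PM M : ℝ) ^ 2 * ∏ p ∈ (range M).filter Nat.Prime, (1 - 1 / (p : ℝ) ^ 2) := by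
    rw [PM, Nat.cast_prod, Nat.cast_prod, ← prod_pow, ← prod_mul_distrib]
    refine prod_congr rfl fun p hp => ?_
    have hp : p.Prime := Nat.prime_of_mem_primesBelow hp
    rw [Nat.cast_sub (Nat.one_le_pow _ _ hp.pos), Nat.cast_pow, Nat.cast_one]
    field_simp [hp.ne_zero]
  simp only [← Nat.cast_sum, sum_range_sum_range_phi, Nat.cast_mul, Nat.cast_pow, hprod]
  field_simp

/-- **Average of `Φ_M`**: for every `M ≥ 1`,
`(1/P_M²) · ∑_{0 ≤ u,v < P_M} Φ_M(u,v) = M² · ∏_{p prime, p < M} (1 − 1/p²)`. -/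
theorem phi_average (M : ℕ) (hM : 1 ≤ M) :
    (1 / (PM M : ℝ) ^ 2) *
        ∑ u ∈ Finset.range (PM M), ∑ v ∈ Finset.range (PM M), (Phi M u v : ℝ) =
      (M : ℝ) ^ 2 * ∏ p ∈ (Finset.range M).filter Nat.Prime, (1 - 1 / (p : ℝ) ^ 2) :=
  phi_average_general M
end
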